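/- Let X be a CAT(0) metric space, r : [0, ∞) → X a geodesic ray with o = r(0), let ε, R > 0 and t, T ≥ 0 be real numbers, and let x ∈ X with d(x, r(T)) ≤ R. Suppose there is a geodesic σ : [0,1] → X from o to x which avoids the open ball of radius ε around r(t), i.e. d(σ(s), r(t)) ≥ ε for all s ∈ [0,1]. Then T − t ≤ (t/ε + 1)·R. -/

import Mathlib

open Metric Real

/-- A geodesic from `x` to `y`, parametrized affinely on `[0,1]`. -/
def IsGeodesic {X : Type*} [MetricSpace X] (σ : ℝ → X) (x y : X) : Prop :=
  σ 0 = x ∧ σ 1 = y ∧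
    ∀ s ∈ Set.Icc (0:ℝ) 1, ∀ t ∈ Set.Icc (0:ℝ) 1,
      dist (σ s) (σ t) = |s - t| * dist x y

/-- A geodesic space: every pair of points is joined by a geodesic. -/
def GeodesicMetricSpace (X : Type*) [MetricSpace X] : Prop :=
  ∀ x y : X, ∃ σ : ℝ → X, IsGeodesic σ x y

/-- The comparison point at parameter `s` on the Euclidean segment from `p` to `q`. -/
noncomputable def cmpPt (p q : EuclideanSpace ℝ (Fin 2)) (s : ℝ) : EuclideanSpace ℝ (Fin 2) :=
  p + s • (q - p)

/-- A CAT(0) space: a geodesic space in which every geodesic triangle satisfies the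
CAT(0) comparison inequality with respect to the Euclidean plane. -/
def IsCAT0 (X : Type*) [MetricSpace X] : Prop :=
  GeodesicMetricSpace X ∧
    ∀ (p q r : X) (σpq σqr σrp : ℝ → X),
      IsGeodesic σpq p q → IsGeodesic σqr q r → IsGeodesic σrp r p →
      ∀ p' q' r' : EuclideanSpace ℝ (Fin 2),
        dist p' q' = dist p q → dist q' r' = dist q r → dist r' p' = dist r p →
        ∀ (i j : Fin 3), ∀ s ∈ Set.Icc (0:ℝ) 1, ∀ t ∈ Set.Icc (0:ℝ) 1,
          dist (![σpq, σqr, σrp] i s) (![σpq, σqr, σrp] j t) ≤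
            dist (![cmpPt p' q', cmpPt q' r', cmpPt r' p'] i s)
                 (![cmpPt p' q', cmpPt q' r', cmpPt r' p'] j t)

/-- `z` is a CAT(-1) point of radius `c > 0`: every geodesic triangle contained in the
open ball `B(z, c)` admits a comparison triangle in the hyperbolic plane `ℍ²` (the upper
half-plane) for which the CAT(-1) comparison inequality holds. -/
def IsCATm1Point {X : Type*} [MetricSpace X] (z : X) (c : ℝ) : Prop :=
  0 < c ∧
    ∀ (p q r : X) (σpq σqr σrp : ℝ → X),
      IsGeodesic σpq p q → IsGeodesic σqr q r → IsGeodesic σrp r p →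
      (∀ s ∈ Set.Icc (0:ℝ) 1, σpq s ∈ Metric.ball z c) →
      (∀ s ∈ Set.Icc (0:ℝ) 1, σqr s ∈ Metric.ball z c) →
      (∀ s ∈ Set.Icc (0:ℝ) 1, σrp s ∈ Metric.ball z c) →
      ∃ (p' q' r' : UpperHalfPlane) (τpq τqr τrp : ℝ → UpperHalfPlane),
        IsGeodesic τpq p' q' ∧ IsGeodesic τqr q' r' ∧ IsGeodesic τrp r' p' ∧
        dist p' q' = dist p q ∧ dist q' r' = dist q r ∧ dist r' p' = dist r p ∧
        ∀ (i j : Fin 3), ∀ s ∈ Set.Icc (0:ℝ) 1, ∀ t ∈ Set.Icc (0:ℝ) 1,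
          dist (![σpq, σqr, σrp] i s) (![σpq, σqr, σrp] j t) ≤
            dist (![τpq, τqr, τrp] i s) (![τpq, τqr, τrp] j t)

/-- A geodesic ray: an isometric embedding of `[0, ∞)`. -/
def IsGeodesicRay {X : Type*} [MetricSpace X] (r : ℝ → X) : Prop :=
  ∀ s t : ℝ, 0 ≤ s → 0 ≤ t → dist (r s) (r t) = |s - t|

/-- A geodesic line: an isometric embedding of `ℝ`. -/
def IsGeodesicLine {X : Type*} [MetricSpace X] (γ : ℝ → X) : Prop :=
  ∀ s t : ℝ, dist (γ s) (γ t) = |s - t|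

/-- Geodesic completeness: every nondegenerate geodesic segment extends to a geodesic line. -/
def GeodesicallyComplete (X : Type*) [MetricSpace X] : Prop :=
  ∀ (x y : X) (σ : ℝ → X), IsGeodesic σ x y → x ≠ y →
    ∃ γ : ℝ → X, IsGeodesicLine γ ∧ ∀ s ∈ Set.Icc (0:ℝ) 1, σ s = γ (s * dist x y)

/-- Cocompactness: some compact set meets every orbit of the isometry group. -/
def Cocompact (X : Type*) [MetricSpace X] : Prop :=
  ∃ K : Set X, IsCompact K ∧ ∀ x : X, ∃ g : X ≃ᵢ X, g x ∈ K

/-- The set of projections of a point `u` onto a subset `Y`. -/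
def projSet {X : Type*} [MetricSpace X] (Y : Set X) (u : X) : Set X :=
  {p ∈ Y | dist u p = Metric.infDist u Y}

/-- `Y` is `B`-contracting: projections of balls disjoint from `Y` have diameter at most `B`. -/
def IsContracting {X : Type*} [MetricSpace X] (Y : Set X) (B : ℝ) : Prop :=
  0 ≤ B ∧
    ∀ (u : X) (ρ : ℝ), Disjoint (Metric.ball u ρ) Y →
      ∀ p q : X, (∃ v ∈ Metric.ball u ρ, p ∈ projSet Y v) →
        (∃ v ∈ Metric.ball u ρ, q ∈ projSet Y v) → dist p q ≤ B

/-! Compare the geodesic `σ` from `o` to `x` with the ray, reparametrized as the geodesic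
from `o` to `r T`: by the CAT(0) inequality in the triangle `(o, x, r T)`, the points at
parameter `t / T` satisfy `ε ≤ d(σ (t/T), r t) ≤ (t/T)·d(x, r T) ≤ (t/T)·R`, so
`T ≤ t R / ε`. -/

theorem IsGeodesic.symm {X : Type*} [MetricSpace X] {σ : ℝ → X} {x y : X}
    (hσ : IsGeodesic σ x y) : IsGeodesic (fun s => σ (1 - s)) y x := by
  obtain ⟨hσ0, hσ1, hσd⟩ := hσ
  refine ⟨by simpa using hσ1, by simpa using hσ0, fun s hs u hu => ?_⟩
  rw [hσd (1 - s) ⟨by linarith [hs.2], by linarith [hs.1]⟩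
    (1 - u) ⟨by linarith [hu.2], by linarith [hu.1]⟩, dist_comm x y, abs_sub_comm]
  ring_nf

theorem IsGeodesicRay.isGeodesic {X : Type*} [MetricSpace X] {r : ℝ → X}
    (hr : IsGeodesicRay r) {T : ℝ} (hT : 0 ≤ T) :
    IsGeodesic (fun s => r (s * T)) (r 0) (r T) := by
  refine ⟨by simp, by simp, fun s hs u hu => ?_⟩
  rw [hr _ _ (mul_nonneg hs.1 hT) (mul_nonneg hu.1 hT), hr 0 T le_rfl hT, ← sub_mul, abs_mul,
    zero_sub, abs_neg, abs_of_nonneg hT]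

/-- Intermediate value theorem on the circle of radius `c`, whose distance to `a` runs from
`|a - c|` to `a + c`. -/
theorem Complex.exists_norm_eq_norm_sub_eq {a b c : ℝ} (ha : 0 ≤ a) (hc : 0 ≤ c)
    (hb : |a - c| ≤ b) (hb' : b ≤ a + c) :
    ∃ w : ℂ, ‖w‖ = c ∧ ‖w - a‖ = b := by
  obtain ⟨θ, -, hθ⟩ : b ∈ (fun θ : ℝ => ‖(c : ℂ) * exp (θ * I) - a‖) '' Set.Icc 0 π := by
    refine intermediate_value_Icc pi_pos.le (by fun_prop) ⟨?_, ?_⟩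
    · simpa [← Complex.ofReal_sub, abs_sub_comm] using hb
    · have : (c : ℂ) * exp (π * I) - a = ((-(a + c) : ℝ) : ℂ) := by
        rw [exp_pi_mul_I]; push_cast; ring
      simp only [this, Complex.norm_real, norm_neg, norm_of_nonneg (add_nonneg ha hc)]
      exact hb'
  refine ⟨c * exp (θ * I), ?_, hθ⟩
  rw [norm_mul, norm_exp_ofReal_mul_I, mul_one, Complex.norm_real, norm_of_nonneg hc]

theorem exists_euclidean_comparison_triangle {X : Type*} [MetricSpace X] (p q r : X) :
    ∃ p' q' r' : EuclideanSpace ℝ (Fin 2),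
      dist p' q' = dist p q ∧ dist q' r' = dist q r ∧ dist r' p' = dist r p := by
  have hqr : |dist p q - dist r p| ≤ dist q r := abs_sub_le_iff.mpr
    ⟨by linarith [dist_triangle p r q, dist_comm r q, dist_comm r p],
     by linarith [dist_triangle r q p, dist_comm q p, dist_comm r q]⟩
  obtain ⟨w, hw, hwq⟩ := Complex.exists_norm_eq_norm_sub_eq dist_nonneg dist_nonneg hqr
    (by linarith [dist_triangle q p r, dist_comm p r, dist_comm q p])
  set e := Complex.orthonormalBasisOneI.repr
  refine ⟨e 0, e (dist p q), e w, ?_, ?_, ?_⟩ <;>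
    simp only [LinearIsometryEquiv.dist_map, Complex.dist_eq]
  · simp [abs_of_nonneg dist_nonneg]
  · rwa [norm_sub_rev]
  · rwa [sub_zero]

theorem dist_cmpPt_one_sub_cmpPt (p' q' r' : EuclideanSpace ℝ (Fin 2)) (s : ℝ) :
    dist (cmpPt p' q' (1 - s)) (cmpPt q' r' s) = |s| * dist p' r' := by
  have h : cmpPt p' q' (1 - s) - cmpPt q' r' s = s • (p' - r') := by
    simp only [cmpPt, smul_sub, sub_smul, one_smul]
    abel
  rw [dist_eq_norm, h, norm_smul, Real.norm_eq_abs, dist_eq_norm]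

theorem IsCAT0.dist_le_mul_dist {X : Type*} [MetricSpace X] (hX : IsCAT0 X) {o x y : X}
    {σ τ : ℝ → X} (hσ : IsGeodesic σ o x) (hτ : IsGeodesic τ o y) {s : ℝ}
    (hs : s ∈ Set.Icc (0 : ℝ) 1) :
    dist (σ s) (τ s) ≤ s * dist x y := by
  obtain ⟨ρ, hρ⟩ := hX.1 y x
  obtain ⟨x', o', y', hxo, hoy, hyx⟩ := exists_euclidean_comparison_triangle x o y
  have h := hX.2 x o y _ _ ρ hσ.symm hτ hρ x' o' y' hxo hoy hyx 0 1 (1 - s)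
    ⟨by linarith [hs.2], by linarith [hs.1]⟩ s hs
  simp only [Matrix.cons_val_zero, Matrix.cons_val_one, sub_sub_cancel] at h
  rwa [dist_cmpPt_one_sub_cmpPt, abs_of_nonneg hs.1, dist_comm x', hyx, dist_comm y] at h

theorem dist_bound_of_geodesic_avoiding_ball_general
    (X : Type*) [MetricSpace X] (hCAT0 : IsCAT0 X)
    (r : ℝ → X) (hr : IsGeodesicRay r) (o : X) (ho : o = r 0)
    (ε R : ℝ) (hε : 0 < ε)
    (t T : ℝ) (ht : 0 ≤ t)
    (x : X) (hx : dist x (r T) ≤ R)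
    (σ : ℝ → X) (hσ : IsGeodesic σ o x)
    (havoid : ∀ s ∈ Set.Icc (0:ℝ) 1, ε ≤ dist (σ s) (r t)) :
    T - t ≤ (t / ε + 1) * R := by
  have hR : 0 ≤ R := dist_nonneg.trans hx
  rcases le_or_gt T t with hTt | htT
  · nlinarith [div_nonneg ht hε.le]
  have hT : 0 < T := ht.trans_lt htT
  have hs : t / T ∈ Set.Icc (0 : ℝ) 1 := ⟨div_nonneg ht hT.le, (div_le_one hT).mpr htT.le⟩
  subst ho
  have hcmp := hCAT0.dist_le_mul_dist hσ (hr.isGeodesic hT.le) hs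
  rw [div_mul_cancel₀ t hT.ne'] at hcmp
  have hεT : ε * T ≤ t * R := by
    have := (havoid _ hs).trans (hcmp.trans (mul_le_mul_of_nonneg_left hx hs.1))
    rwa [div_mul_eq_mul_div, le_div_iff₀ hT] at this
  have hTR : T ≤ t / ε * R := by
    rw [div_mul_eq_mul_div, le_div_iff₀ hε]; linarith
  linarith

/-- distance bound at the beginning of the proof of Lemma 3.4. If a
geodesic from `o = r 0` to a point `x` with `d(x, r T) ≤ R` avoids the open ball of
radius `ε` around `r t`, then `T − t ≤ (t/ε + 1)·R`. -/
theorem dist_bound_of_geodesic_avoiding_ball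
    (X : Type*) [MetricSpace X] (hCAT0 : IsCAT0 X)
    (r : ℝ → X) (hr : IsGeodesicRay r) (o : X) (ho : o = r 0)
    (ε R : ℝ) (hε : 0 < ε) (hR : 0 < R)
    (t T : ℝ) (ht : 0 ≤ t) (hT : 0 ≤ T)
    (x : X) (hx : dist x (r T) ≤ R)
    (σ : ℝ → X) (hσ : IsGeodesic σ o x)
    (havoid : ∀ s ∈ Set.Icc (0:ℝ) 1, ε ≤ dist (σ s) (r t)) :
    T - t ≤ (t / ε + 1) * R :=
  dist_bound_of_geodesic_avoiding_ball_general X hCAT0 r hr o ho ε R hε t T ht x hx σ hσ havoid
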